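/- Let Ω ⊆ ℝ² be a compact set and P_1, …, P_ρ ⊆ ℝ² nonempty compact sets whose topological frontiers are Lebesgue-negligible. Let u_1, …, u_ρ : ℝ² × ℝ² → ℝ be continuous functions, a_1, …, a_ρ ∈ ℝ, and D, B : ℝ² → ℝ nonnegative integrable functions. Assume that for every Q = (q_1, …, q_ρ) ∈ Γ and all i ≠ j the set {q ∈ Ω : a_i + u_i(q, q_i) = a_j + u_j(q, q_j)} is Lebesgue-negligible. Let I_1, …, I_ρ, C_1, …, C_ρ, L : ℝ → ℝ be continuous functions. Then the function F(Q) = ∑_{i=1}^ρ [ I_i(∫_{q_i + P_i} B(q) dq) + C_i(∫_{Â_i(Q)} D(q) dq) ] + L(∫_{(q_1 + P_1) ∪ … ∪ (q_ρ + P_ρ)} D(q) dq) is continuous on Γ. -/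

import Mathlib

open Set MeasureTheory Filter Topology

/-!
As `Q' → Q`, almost every point `x` eventually has the same membership in every integration
domain at `Q'` as at `Q`. For a translate `Q' i + P i` this holds as soon as `x` is off the
translated frontier `Q i + frontier (P i)`, a null set. For a best-reply cell it holds moreover
off the tie sets at `Q`, which are null by hypothesis: away from them each strict comparison of
costs at `x` is an open condition in `Q'`. Dominated convergence, with dominating function `|D|`
or `|B|`, turns this a.e. eventual agreement of indicators into continuity of the integrals.
-/

theorem eventually_mem_iff_of_notMem_frontier {X : Type*} [TopologicalSpace X] {s : Set X}
    {x : X} (hx : x ∉ frontier s) : ∀ᶠ y in 𝓝 x, (y ∈ s ↔ x ∈ s) := by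
  by_cases hxs : x ∈ interior s
  · exact eventually_of_mem (mem_interior_iff_mem_nhds.1 hxs) fun y hy =>
      iff_of_true hy (interior_subset hxs)
  · have hxc : x ∉ closure s := fun h => hx ⟨h, hxs⟩
    exact eventually_of_mem (isClosed_closure.isOpen_compl.mem_nhds hxc) fun y hy =>
      iff_of_false (fun h => hy (subset_closure h)) fun h => hxc (subset_closure h)

theorem eventually_lt_iff_of_ne {Y α : Type*} [TopologicalSpace Y] [TopologicalSpace α]
    [LinearOrder α] [OrderClosedTopology α] {f g : Y → α} (hf : Continuous f)
    (hg : Continuous g) {y : Y} (hne : f y ≠ g y) :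
    ∀ᶠ z in 𝓝 y, (f z < g z ↔ f y < g y) :=
  eventually_mem_iff_of_notMem_frontier (s := {z | f z < g z})
    fun h => hne (frontier_lt_subset_eq hf hg h)

theorem tendsto_setIntegral_of_ae_eventually_mem_iff {α ι E : Type*} [MeasurableSpace α]
    {μ : Measure α} [NormedAddCommGroup E] [NormedSpace ℝ E] {l : Filter ι}
    [l.IsCountablyGenerated] {f : α → E} (hf : Integrable f μ) {s : ι → Set α} {t : Set α}
    (hs : ∀ n, MeasurableSet (s n)) (ht : MeasurableSet t)
    (hst : ∀ᵐ x ∂μ, ∀ᶠ n in l, (x ∈ s n ↔ x ∈ t)) :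
    Tendsto (fun n => ∫ x in s n, f x ∂μ) l (𝓝 (∫ x in t, f x ∂μ)) := by
  simp only [← integral_indicator (hs _), ← integral_indicator ht]
  refine tendsto_integral_filter_of_dominated_convergence (fun x => ‖f x‖)
    (.of_forall fun n => hf.aestronglyMeasurable.indicator (hs n))
    (.of_forall fun n => .of_forall fun x => norm_indicator_le_norm_self f x) hf.norm ?_
  filter_upwards [hst] with x hx
  exact tendsto_const_nhds.congr' <| hx.mono fun n hn => by
    by_cases h : x ∈ t <;> simp [h, hn]

def bestReplyCell {ι G : Type*} [Add G] [TopologicalSpace G] (Ω : Set G) (P : ι → Set G)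
    (a : ι → ℝ) (u : ι → G × G → ℝ) (i : ι) (Q : ι → G) : Set G :=
  {q ∈ Ω \ ⋃ j, interior ((Q j + ·) '' P j) |
    ∀ j, j ≠ i → a i + u i (q, Q i) < a j + u j (q, Q j)}

section BestReplyCell

variable {ι G : Type*} [Add G] [TopologicalSpace G] {Ω : Set G} {P : ι → Set G}
  {a : ι → ℝ} {u : ι → G × G → ℝ} {i : ι}

theorem measurableSet_bestReplyCell [Countable ι] [MeasurableSpace G] [OpensMeasurableSpace G]
    (hΩ : MeasurableSet Ω) (hu : ∀ j, Continuous (u j)) (Q : ι → G) :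
    MeasurableSet (bestReplyCell Ω P a u i Q) := by
  have hcell : bestReplyCell Ω P a u i Q = (Ω \ ⋃ j, interior ((Q j + ·) '' P j)) ∩
      ⋂ j, ⋂ (_ : j ≠ i), {q | a i + u i (q, Q i) < a j + u j (q, Q j)} := by
    ext; simp [bestReplyCell]
  rw [hcell]
  exact (hΩ.diff (.iUnion fun j => isOpen_interior.measurableSet)).inter
    (.iInter fun j => .iInter fun _ => (isOpen_lt (by fun_prop) (by fun_prop)).measurableSet)

theorem eventually_mem_bestReplyCell_iff [Finite ι] (hu : ∀ j, Continuous (u j))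
    {Q : ι → G} {x : G}
    (hP : ∀ᶠ Q' in 𝓝 Q, ∀ j,
      x ∈ interior ((Q' j + ·) '' P j) ↔ x ∈ interior ((Q j + ·) '' P j))
    (hties : ∀ j, i ≠ j → x ∈ Ω → a i + u i (x, Q i) ≠ a j + u j (x, Q j)) :
    ∀ᶠ Q' in 𝓝 Q, (x ∈ bestReplyCell Ω P a u i Q' ↔ x ∈ bestReplyCell Ω P a u i Q) := by
  by_cases hx : x ∈ Ω
  swap
  · exact .of_forall fun Q' => iff_of_false (fun h => hx h.1.1) fun h => hx h.1.1
  have hcmp : ∀ᶠ Q' in 𝓝 Q, ∀ j, j ≠ i → (a i + u i (x, Q' i) < a j + u j (x, Q' j) ↔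
      a i + u i (x, Q i) < a j + u j (x, Q j)) := by
    refine eventually_all.2 fun j => ?_
    by_cases hji : j = i
    · exact .of_forall fun _ h => absurd hji h
    · exact (eventually_lt_iff_of_ne (by fun_prop) (by fun_prop)
        (hties j (Ne.symm hji) hx)).mono fun _ h _ => h
  filter_upwards [hP, hcmp] with Q' hint hlt
  simp only [bestReplyCell, mem_ofPred_eq, Set.mem_sdiff, mem_iUnion, not_exists, hx,
    true_and]
  exact and_congr (forall_congr' fun j => not_congr (hint j))
    (forall_congr' fun j => imp_congr_right (hlt j))

end BestReplyCell

section Translate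

variable {G : Type*} [AddGroup G]

theorem ae_neg_add_notMem [MeasurableSpace G] [MeasurableAdd G] {μ : Measure G}
    [μ.IsAddLeftInvariant] {s : Set G} (hs : μ s = 0) (q : G) : ∀ᵐ x ∂μ, -q + x ∉ s :=
  measure_eq_zero_iff_ae_notMem.1 (show μ ((-q + ·) ⁻¹' s) = 0 by rwa [measure_preimage_add])

variable [TopologicalSpace G] [IsTopologicalAddGroup G]

theorem eventually_mem_add_image_iff {s : Set G} {q x : G} (hx : -q + x ∉ frontier s) :
    ∀ᶠ v in 𝓝 q, (x ∈ (v + ·) '' s ↔ x ∈ (q + ·) '' s) ∧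
      (x ∈ interior ((v + ·) '' s) ↔ x ∈ interior ((q + ·) '' s)) := by
  have key : ∀ t : Set G, -q + x ∉ frontier t →
      ∀ᶠ v in 𝓝 q, (x ∈ (v + ·) '' t ↔ x ∈ (q + ·) '' t) := fun t ht => by
    simp only [image_add_left, mem_preimage]
    exact ((continuous_neg.add continuous_const).tendsto' q _ rfl).eventually
      (eventually_mem_iff_of_notMem_frontier ht)
  have hint : ∀ v : G, interior ((v + ·) '' s) = (v + ·) '' interior s := fun v =>
    ((Homeomorph.addLeft v).image_interior s).symm
  simp only [hint]
  exact (key s hx).and (key _ fun h => hx (frontier_interior_subset h))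

variable [MeasurableSpace G] [BorelSpace G] {μ : Measure G} [μ.IsAddLeftInvariant]
  {ι : Type*} [Finite ι]

theorem ae_eventually_mem_add_image_iff {P : ι → Set G}
    (hfr : ∀ i, μ (frontier (P i)) = 0) (Q : ι → G) :
    ∀ᵐ x ∂μ, ∀ᶠ Q' in 𝓝 Q, ∀ i, (x ∈ (Q' i + ·) '' P i ↔ x ∈ (Q i + ·) '' P i) ∧
      (x ∈ interior ((Q' i + ·) '' P i) ↔ x ∈ interior ((Q i + ·) '' P i)) := by
  refine (ae_all_iff.2 fun i => (ae_neg_add_notMem (hfr i) (Q i)).mono fun x hx => ?_).mono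
    fun x hx => eventually_all.2 hx
  exact ((continuous_apply i).tendsto Q).eventually (eventually_mem_add_image_iff hx)

variable [FirstCountableTopology G] {E : Type*} [NormedAddCommGroup E] [NormedSpace ℝ E]
  {f : G → E}

theorem continuousAt_setIntegral_add_image (hf : Integrable f μ) {s : Set G}
    (hs : MeasurableSet s) (hfr : μ (frontier s) = 0) (q : G) :
    ContinuousAt (fun v => ∫ x in (v + ·) '' s, f x ∂μ) q :=
  tendsto_setIntegral_of_ae_eventually_mem_iff hf (hs.const_vadd ·) (hs.const_vadd q) <|
    (ae_neg_add_notMem hfr q).mono fun _ hx =>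
      (eventually_mem_add_image_iff hx).mono fun _ h => h.1

theorem continuousAt_setIntegral_iUnion_add_image (hf : Integrable f μ)
    {P : ι → Set G} (hP : ∀ i, MeasurableSet (P i)) (hfr : ∀ i, μ (frontier (P i)) = 0)
    (Q : ι → G) :
    ContinuousAt (fun Q' : ι → G => ∫ x in ⋃ i, (Q' i + ·) '' P i, f x ∂μ) Q := by
  refine tendsto_setIntegral_of_ae_eventually_mem_iff hf
    (fun Q' => .iUnion fun i => (hP i).const_vadd (Q' i))
    (.iUnion fun i => (hP i).const_vadd (Q i)) ?_
  filter_upwards [ae_eventually_mem_add_image_iff hfr Q] with x hx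
  filter_upwards [hx] with Q' h
  simp only [mem_iUnion]
  exact exists_congr fun i => (h i).1

theorem continuousAt_setIntegral_bestReplyCell (hf : Integrable f μ) {Ω : Set G}
    {P : ι → Set G} {a : ι → ℝ} {u : ι → G × G → ℝ} {i : ι} (hΩ : MeasurableSet Ω)
    (hfr : ∀ j, μ (frontier (P j)) = 0) (hu : ∀ j, Continuous (u j)) {Q : ι → G}
    (hties : ∀ j, i ≠ j → μ {q ∈ Ω | a i + u i (q, Q i) = a j + u j (q, Q j)} = 0) :
    ContinuousAt (fun Q' => ∫ x in bestReplyCell Ω P a u i Q', f x ∂μ) Q := by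
  have hnotie : ∀ᵐ x ∂μ, ∀ j, i ≠ j → x ∈ Ω → a i + u i (x, Q i) ≠ a j + u j (x, Q j) :=
    ae_all_iff.2 fun j => by
      by_cases hij : i = j
      · exact .of_forall fun _ h => absurd hij h
      · exact (measure_eq_zero_iff_ae_notMem.1 (hties j hij)).mono
          fun x hx _ hxΩ heq => hx ⟨hxΩ, heq⟩
  refine tendsto_setIntegral_of_ae_eventually_mem_iff hf
    (measurableSet_bestReplyCell hΩ hu) (measurableSet_bestReplyCell hΩ hu Q) ?_
  filter_upwards [ae_eventually_mem_add_image_iff hfr Q, hnotie] with x hx hxt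
  exact eventually_mem_bestReplyCell_iff hu (hx.mono fun _ h j => (h j).2) hxt

end Translate

theorem bilevel_objective_continuousOn_general
    (ρ : ℕ) (Ω : Set (EuclideanSpace ℝ (Fin 2))) (hΩ : IsCompact Ω)
    (P : Fin ρ → Set (EuclideanSpace ℝ (Fin 2)))
    (hPc : ∀ i, IsCompact (P i))
    (hPfr : ∀ i, volume (frontier (P i)) = 0)
    (u : Fin ρ → EuclideanSpace ℝ (Fin 2) × EuclideanSpace ℝ (Fin 2) → ℝ)
    (hu : ∀ i, Continuous (u i))
    (a : Fin ρ → ℝ)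
    (D B : EuclideanSpace ℝ (Fin 2) → ℝ)
    (hD : Integrable D)
    (hB : Integrable B)
    (Γ : Set (Fin ρ → EuclideanSpace ℝ (Fin 2)))
    (hties : ∀ Q ∈ Γ, ∀ i j, i ≠ j →
      volume {q ∈ Ω | a i + u i (q, Q i) = a j + u j (q, Q j)} = 0)
    (Ahat : Fin ρ → (Fin ρ → EuclideanSpace ℝ (Fin 2)) →
      Set (EuclideanSpace ℝ (Fin 2)))
    (hAhat : ∀ i Q, Ahat i Q =
      {q ∈ Ω \ ⋃ j, interior ((fun p => Q j + p) '' P j) |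
        ∀ j, j ≠ i → a i + u i (q, Q i) < a j + u j (q, Q j)})
    (I C : Fin ρ → ℝ → ℝ) (L : ℝ → ℝ)
    (hI : ∀ i, Continuous (I i)) (hC : ∀ i, Continuous (C i)) (hL : Continuous L)
    (F : (Fin ρ → EuclideanSpace ℝ (Fin 2)) → ℝ)
    (hF : ∀ Q, F Q =
      (∑ i, (I i (∫ q in (fun p => Q i + p) '' P i, B q) +
             C i (∫ q in Ahat i Q, D q))) +
      L (∫ q in ⋃ i, (fun p => Q i + p) '' P i, D q)) :
    ContinuousOn F Γ := by
  have hPm i : MeasurableSet (P i) := (hPc i).isClosed.measurableSet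
  obtain rfl : Ahat = bestReplyCell Ω P a u := funext₂ hAhat
  refine (continuousOn_congr fun Q _ => hF Q).2 fun Q hQ => ContinuousAt.continuousWithinAt ?_
  have hBint i : ContinuousAt (fun Q' : Fin ρ → _ => ∫ q in (Q' i + ·) '' P i, B q) Q :=
    (continuousAt_setIntegral_add_image hB (hPm i) (hPfr i) (Q i)).comp_of_eq
      (continuous_apply i).continuousAt rfl
  have hcell i := continuousAt_setIntegral_bestReplyCell hD hΩ.isClosed.measurableSet hPfr hu
    (hties Q hQ i)
  have hunion := continuousAt_setIntegral_iUnion_add_image hD hPm hPfr Q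
  exact (tendsto_finsetSum _ fun i _ => ((hI i).continuousAt.comp (hBint i)).add
    ((hC i).continuousAt.comp (hcell i))).add (hL.continuousAt.comp hunion)

/-- continuity on `Γ` of the upper-level objective
`F(Q) = ∑ i [I_i(∫_{q_i+P_i} B) + C_i(∫_{Â_i(Q)} D)] + L(∫_{⋃ i (q_i+P_i)} D)`
of the bilevel location-allocation problem BL. -/
theorem bilevel_objective_continuousOn
    (ρ : ℕ) (Ω : Set (EuclideanSpace ℝ (Fin 2))) (hΩ : IsCompact Ω)
    (P : Fin ρ → Set (EuclideanSpace ℝ (Fin 2)))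
    (hPc : ∀ i, IsCompact (P i)) (hPne : ∀ i, (P i).Nonempty)
    (hPfr : ∀ i, volume (frontier (P i)) = 0)
    (u : Fin ρ → EuclideanSpace ℝ (Fin 2) × EuclideanSpace ℝ (Fin 2) → ℝ)
    (hu : ∀ i, Continuous (u i))
    (a : Fin ρ → ℝ)
    (D B : EuclideanSpace ℝ (Fin 2) → ℝ)
    (hD0 : ∀ q, 0 ≤ D q) (hD : Integrable D)
    (hB0 : ∀ q, 0 ≤ B q) (hB : Integrable B)
    (Γ : Set (Fin ρ → EuclideanSpace ℝ (Fin 2)))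
    (hΓ : Γ = {Q | (∀ i, (fun p => Q i + p) '' P i ⊆ Ω) ∧
      ∀ i j, i ≠ j →
        interior ((fun p => Q i + p) '' P i) ∩
          interior ((fun p => Q j + p) '' P j) = ∅})
    (hties : ∀ Q ∈ Γ, ∀ i j, i ≠ j →
      volume {q ∈ Ω | a i + u i (q, Q i) = a j + u j (q, Q j)} = 0)
    (Ahat : Fin ρ → (Fin ρ → EuclideanSpace ℝ (Fin 2)) →
      Set (EuclideanSpace ℝ (Fin 2)))
    (hAhat : ∀ i Q, Ahat i Q =
      {q ∈ Ω \ ⋃ j, interior ((fun p => Q j + p) '' P j) |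
        ∀ j, j ≠ i → a i + u i (q, Q i) < a j + u j (q, Q j)})
    (I C : Fin ρ → ℝ → ℝ) (L : ℝ → ℝ)
    (hI : ∀ i, Continuous (I i)) (hC : ∀ i, Continuous (C i)) (hL : Continuous L)
    (F : (Fin ρ → EuclideanSpace ℝ (Fin 2)) → ℝ)
    (hF : ∀ Q, F Q =
      (∑ i, (I i (∫ q in (fun p => Q i + p) '' P i, B q) +
             C i (∫ q in Ahat i Q, D q))) +
      L (∫ q in ⋃ i, (fun p => Q i + p) '' P i, D q)) :
    ContinuousOn F Γ :=
  bilevel_objective_continuousOn_general ρ Ω hΩ P hPc hPfr u hu a D B hD hB Γ hties Ahat hAhat I C L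
    hI hC hL F hF
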